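/- Let N̂, D̂ be random variables with D̂ ≠ 0 a.s., let N, D be real numbers with D > 0, and let α ∈ [0,1]. Suppose R̂ = N̂/D̂ satisfies |R̂| ≤ M a.s. for some constant M. Then a.s., D·|R̂ - N/D| ≤ |N̂ - N| + (|N̂|/D)·|D̂ - D| + M·|D̂ - D|^{1+α}/D^α. -/

import Mathlib

/-!
Put `R = N̂/D̂` and `t = |D̂ - D|`. Since `R D̂ = N̂`, the error `D R - N` equals both
`(N̂ - N) + R (D - D̂)` and `(N̂ - N) + (N̂/D)(D - D̂) + R (D - D̂)²/D`; with `|R| ≤ M` this bounds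
`D |R - N/D|` by `|N̂ - N| + (|N̂|/D) t + M min(t, t²/D)`. Finally
`min(t, t²/D) = t min(1, t/D) ≤ t (t/D)^α = t^(1+α)/D^α` for `α ∈ [0, 1]`.
-/

open MeasureTheory

lemma min_one_le_rpow {x α : ℝ} (hx : 0 ≤ x) (hα₀ : 0 ≤ α) (hα₁ : α ≤ 1) :
    min 1 x ≤ x ^ α := by
  rcases le_total x 1 with h | h
  · calc min 1 x ≤ x := min_le_right _ _
      _ = x ^ (1 : ℝ) := (Real.rpow_one x).symm
      _ ≤ x ^ α := Real.rpow_le_rpow_of_exponent_ge' hx h hα₀ hα₁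
  · exact (min_le_left _ _).trans (Real.one_le_rpow h hα₀)

lemma min_le_rpow_one_add_div_rpow {t D α : ℝ} (ht : 0 ≤ t) (hD : 0 < D) (hα₀ : 0 ≤ α)
    (hα₁ : α ≤ 1) : min t (t ^ 2 / D) ≤ t ^ (1 + α) / D ^ α := by
  have hmin : min t (t ^ 2 / D) = t * min 1 (t / D) := by
    rw [mul_min_of_nonneg _ _ ht, mul_one, mul_div_assoc', sq]
  have hrpow : t ^ (1 + α) / D ^ α = t * (t / D) ^ α := by
    rw [Real.div_rpow ht hD.le, Real.rpow_add' ht (by linarith), Real.rpow_one, mul_div_assoc]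
  rw [hmin, hrpow]
  exact mul_le_mul_of_nonneg_left (min_one_le_rpow (div_nonneg ht hD.le) hα₀ hα₁) ht

lemma mul_abs_div_sub_div_le {n d N D M : ℝ} (hD : 0 < D) (hd : d ≠ 0) (hM : |n / d| ≤ M) :
    D * |n / d - N / D| ≤
      |n - N| + |n| / D * |d - D| + M * min |d - D| (|d - D| ^ 2 / D) := by
  set R := n / d with hR
  set t := |d - D|
  have habs : |D - d| = t := abs_sub_comm _ _
  have hlinear : D * |R - N / D| ≤ |n - N| + M * t := by
    have h : D * (R - N / D) = (n - N) + R * (D - d) := by rw [hR]; field_simp; ring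
    calc D * |R - N / D| = |(n - N) + R * (D - d)| := by
          rw [← h, abs_mul, abs_of_pos hD]
      _ ≤ |n - N| + |R| * t := by rw [← habs, ← abs_mul]; exact abs_add_le _ _
      _ ≤ |n - N| + M * t := by gcongr
  have hquadratic : D * |R - N / D| ≤ |n - N| + |n| / D * t + M * (t ^ 2 / D) := by
    have h : D * (R - N / D) = (n - N) + n / D * (D - d) + R * ((D - d) ^ 2 / D) := by
      rw [hR]; field_simp; ring
    calc D * |R - N / D| = |(n - N) + n / D * (D - d) + R * ((D - d) ^ 2 / D)| := by
          rw [← h, abs_mul, abs_of_pos hD]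
      _ ≤ |n - N| + |n / D * (D - d)| + |R * ((D - d) ^ 2 / D)| := abs_add_three _ _ _
      _ = |n - N| + |n| / D * t + |R| * (t ^ 2 / D) := by
          simp only [abs_mul, abs_div, abs_pow, habs, abs_of_pos hD]
      _ ≤ |n - N| + |n| / D * t + M * (t ^ 2 / D) := by gcongr
  have hn : 0 ≤ |n| / D * t := by positivity
  rcases le_total t (t ^ 2 / D) with h | h
  · rw [min_eq_left h]; linarith
  · rwa [min_eq_right h]

theorem ratio_pointwise_bound_general {Ω : Type*} [MeasurableSpace Ω] (μ : Measure Ω)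
    (Nhat Dhat : Ω → ℝ) (N D M α : ℝ)
    (hD : 0 < D) (hα : α ∈ Set.Icc (0:ℝ) 1)
    (hDhat : ∀ᵐ ω ∂μ, Dhat ω ≠ 0)
    (hM : ∀ᵐ ω ∂μ, |Nhat ω / Dhat ω| ≤ M) :
    ∀ᵐ ω ∂μ, D * |Nhat ω / Dhat ω - N / D| ≤
      |Nhat ω - N| + (|Nhat ω| / D) * |Dhat ω - D|
        + M * |Dhat ω - D| ^ (1 + α) / D ^ α := by
  filter_upwards [hDhat, hM] with ω hDω hMω
  have hM₀ : 0 ≤ M := (abs_nonneg _).trans hMω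
  have hmin := min_le_rpow_one_add_div_rpow (abs_nonneg (Dhat ω - D)) hD hα.1 hα.2
  calc _ ≤ |Nhat ω - N| + |Nhat ω| / D * |Dhat ω - D|
          + M * min |Dhat ω - D| (|Dhat ω - D| ^ 2 / D) := mul_abs_div_sub_div_le hD hDω hMω
    _ ≤ _ := by rw [mul_div_assoc]; gcongr

theorem ratio_pointwise_bound {Ω : Type*} [MeasurableSpace Ω] (μ : Measure Ω)
    [IsProbabilityMeasure μ] (Nhat Dhat : Ω → ℝ) (N D M α : ℝ)
    (hD : 0 < D) (hα : α ∈ Set.Icc (0:ℝ) 1)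
    (hDhat : ∀ᵐ ω ∂μ, Dhat ω ≠ 0)
    (hM : ∀ᵐ ω ∂μ, |Nhat ω / Dhat ω| ≤ M) :
    ∀ᵐ ω ∂μ, D * |Nhat ω / Dhat ω - N / D| ≤
      |Nhat ω - N| + (|Nhat ω| / D) * |Dhat ω - D|
        + M * |Dhat ω - D| ^ (1 + α) / D ^ α :=
  ratio_pointwise_bound_general μ Nhat Dhat N D M α hD hα hDhat hM
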